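/- arXiv:2010.11116 — 3 statements merged into one kernel-verified Lean document; each statement's English description precedes it below -/
import Mathlib

section
/- If C ⊆ {0,1}^N is a B_h sequence and every string in C is a Dyck path (i.e., every codeword has weight N/2 and every proper prefix of length i has weight at least floor(i/2)+1), then C is an h-MC code: for any two distinct subsets S, T of C each of size at most h, the multiset union of prefix-suffix composition multisets over S differs from that over T. -/
open Finset

def wtB {m : ℕ} (s : Fin m → Bool) : ℕ := ∑ i, if s i then 1 else 0

def onesPref {n : ℕ} (s : Fin n → Bool) (i : ℕ) : ℕ :=
  ∑ j ∈ Finset.univ.filter (fun j : Fin n => (j : ℕ) < i), if s j then 1 else 0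

def onesSuff {n : ℕ} (s : Fin n → Bool) (i : ℕ) : ℕ :=
  ∑ j ∈ Finset.univ.filter (fun j : Fin n => n - i ≤ (j : ℕ)), if s j then 1 else 0

/-- Prefix composition multiset: compositions (number of 0s, number of 1s) of all
prefixes of lengths 1,...,n. -/
def Mp {n : ℕ} (s : Fin n → Bool) : Multiset (ℕ × ℕ) :=
  (Multiset.range n).map (fun i => (i + 1 - onesPref s (i + 1), onesPref s (i + 1)))

/-- Suffix composition multiset. -/
def Msf {n : ℕ} (s : Fin n → Bool) : Multiset (ℕ × ℕ) :=
  (Multiset.range n).map (fun i => (i + 1 - onesSuff s (i + 1), onesSuff s (i + 1)))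

/-- Prefix-suffix composition multiset M(s). -/
def Mps {n : ℕ} (s : Fin n → Bool) : Multiset (ℕ × ℕ) := Mp s + Msf s

/-- C is a B_h sequence: distinct subsets of size ≤ h have distinct coordinatewise
integer sums. -/
def IsBh {N : ℕ} (C : Finset (Fin N → Bool)) (h : ℕ) : Prop :=
  ∀ S T : Finset (Fin N → Bool), S ⊆ C → T ⊆ C → S.card ≤ h → T.card ≤ h →
    ((fun i : Fin N => ∑ x ∈ S, if x i then (1 : ℕ) else 0) =
      fun i : Fin N => ∑ x ∈ T, if x i then (1 : ℕ) else 0) → S = T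

/-- s is a Dyck path: weight N/2 and every prefix of length i ∈ [N-1] has weight
at least ⌊i/2⌋ + 1. -/
def IsDyck {N : ℕ} (s : Fin N → Bool) : Prop :=
  onesPref s N = N / 2 ∧ ∀ i : ℕ, 1 ≤ i → i ≤ N - 1 → i / 2 + 1 ≤ onesPref s i

/-!
For a Dyck path every prefix of length `1 ≤ i < N` contains strictly more ones than zeros, while
no suffix does. So in `M(s)` the only composition of total length `i` with more ones than zeros is
that of the prefix of length `i`, and summing the numbers of ones of such compositions in
`∑_{x ∈ S} M(x)` recovers `∑_{x ∈ S} wt(x_1 … x_i)`. At `i = N` this sum is `|S| · N/2`, and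
`|S|` is read off the size of the multiset. Consecutive differences of these prefix sums are the
coordinatewise sums over `S`, so the `B_h` property forces `S = T`.
-/

theorem onesPref_zero {n : ℕ} (s : Fin n → Bool) : onesPref s 0 = 0 := by
  simp [onesPref]

theorem onesPref_le {n : ℕ} (s : Fin n → Bool) (i : ℕ) : onesPref s i ≤ i := by
  calc onesPref s i ≤ #(univ.filter fun j : Fin n => (j : ℕ) < i) := by
        unfold onesPref
        exact sum_le_card_nsmul _ _ 1 (fun j _ => by split <;> omega) |>.trans (by simp)
    _ ≤ #(range i) := card_le_card_of_injOn Fin.val (fun j hj => by simpa using hj)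
        Fin.val_injective.injOn
    _ = i := card_range i

theorem onesPref_succ {n : ℕ} (s : Fin n → Bool) (j : Fin n) :
    onesPref s (j + 1) = onesPref s j + if s j then 1 else 0 := by
  have hins : univ.filter (fun k : Fin n => (k : ℕ) < j + 1) =
      insert j (univ.filter fun k : Fin n => (k : ℕ) < j) := by
    ext k
    simp only [mem_filter, mem_univ, true_and, mem_insert, Fin.ext_iff]
    omega
  rw [onesPref, hins, sum_insert (by simp), add_comm]
  rfl

theorem onesSuff_add_onesPref {n : ℕ} (s : Fin n → Bool) (i : ℕ) :
    onesSuff s i + onesPref s (n - i) = onesPref s n := by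
  unfold onesSuff onesPref
  rw [← sum_filter_add_sum_filter_not (univ.filter fun j : Fin n => (j : ℕ) < n)
    (fun j : Fin n => n - i ≤ (j : ℕ))]
  congr 2 <;> ext j <;> simp only [mem_filter, mem_univ, true_and] <;> omega

theorem IsDyck.two_mul_onesSuff_le {n : ℕ} {s : Fin n → Bool} (hs : IsDyck s) (i : ℕ) :
    2 * onesSuff s i ≤ i := by
  have hsplit := onesSuff_add_onesPref s i
  rw [hs.1] at hsplit
  by_cases hi : 1 ≤ n - i ∧ n - i ≤ n - 1
  · have := hs.2 (n - i) hi.1 hi.2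
    omega
  · rcases (by omega : i = 0 ∨ n ≤ i) with rfl | hni
    · rw [Nat.sub_zero, hs.1] at hsplit
      omega
    · rw [Nat.sub_eq_zero_of_le hni, onesPref_zero] at hsplit
      omega

def majorityOnesSum (i : ℕ) : Multiset (ℕ × ℕ) →+ ℕ where
  toFun M := ((M.filter fun p => p.1 + p.2 = i ∧ p.1 < p.2).map Prod.snd).sum
  map_zero' := rfl
  map_add' _ _ := by simp only [Multiset.filter_add, Multiset.map_add, Multiset.sum_add]

theorem majorityOnesSum_apply (i : ℕ) (M : Multiset (ℕ × ℕ)) :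
    majorityOnesSum i M = ((M.filter fun p => p.1 + p.2 = i ∧ p.1 < p.2).map Prod.snd).sum :=
  rfl

theorem majorityOnesSum_Mp {n : ℕ} {s : Fin n → Bool} (hs : IsDyck s) {i : ℕ}
    (h1 : 1 ≤ i) (h2 : i ≤ n - 1) : majorityOnesSum i (Mp s) = onesPref s i := by
  have hfilter : ((Multiset.range n).filter fun j =>
      j + 1 - onesPref s (j + 1) + onesPref s (j + 1) = i ∧
        j + 1 - onesPref s (j + 1) < onesPref s (j + 1)) = {i - 1} := by
    trans (Multiset.range n).filter (· = i - 1)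
    · refine Multiset.filter_congr fun j _ => ?_
      have hle := onesPref_le s (j + 1)
      constructor
      · rintro ⟨hlen, -⟩
        omega
      · rintro rfl
        rw [Nat.sub_add_cancel h1] at hle ⊢
        have := hs.2 i h1 h2
        omega
    · rw [Multiset.filter_eq', Multiset.count_eq_one_of_mem (Multiset.nodup_range n)
        (Multiset.mem_range.2 (by omega)), Multiset.replicate_one]
  simp only [majorityOnesSum_apply, Mp, Multiset.filter_map, Function.comp_def, hfilter,
    Multiset.map_singleton, Multiset.sum_singleton, Nat.sub_add_cancel h1]

theorem majorityOnesSum_Msf {n : ℕ} {s : Fin n → Bool} (hs : IsDyck s) (i : ℕ) :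
    majorityOnesSum i (Msf s) = 0 := by
  suffices hnil : (Msf s).filter (fun p => p.1 + p.2 = i ∧ p.1 < p.2) = 0 by
    rw [majorityOnesSum_apply, hnil, Multiset.map_zero, Multiset.sum_zero]
  refine Multiset.filter_eq_nil.2 fun p hp ⟨_, hlt⟩ => ?_
  obtain ⟨j, -, rfl⟩ := Multiset.mem_map.1 hp
  have := hs.two_mul_onesSuff_le (j + 1)
  dsimp only at hlt
  omega

theorem majorityOnesSum_Mps {n : ℕ} {s : Fin n → Bool} (hs : IsDyck s) {i : ℕ}
    (h1 : 1 ≤ i) (h2 : i ≤ n - 1) : majorityOnesSum i (Mps s) = onesPref s i := by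
  rw [Mps, map_add, majorityOnesSum_Mp hs h1 h2, majorityOnesSum_Msf hs, add_zero]

theorem card_sum_Mps {N : ℕ} (S : Finset (Fin N → Bool)) :
    Multiset.card (∑ x ∈ S, Mps x) = #S * (2 * N) := by
  refine (map_sum Multiset.cardHom Mps S).trans ?_
  simp [Multiset.cardHom, Mps, Mp, Msf, two_mul]

theorem sum_onesPref_eq_of_sum_Mps_eq {N : ℕ} {S T : Finset (Fin N → Bool)}
    (hS : ∀ x ∈ S, IsDyck x) (hT : ∀ x ∈ T, IsDyck x)
    (hM : ∑ x ∈ S, Mps x = ∑ x ∈ T, Mps x) {i : ℕ} (hi : i ≤ N) :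
    ∑ x ∈ S, onesPref x i = ∑ x ∈ T, onesPref x i := by
  obtain rfl | hi0 := Nat.eq_zero_or_pos i
  · simp [onesPref_zero]
  obtain rfl | hiN := hi.eq_or_lt
  · have hcard : #S = #T := by
      have := card_sum_Mps S
      rw [hM, card_sum_Mps T] at this
      exact Nat.eq_of_mul_eq_mul_right (by omega) this.symm
    rw [sum_congr rfl fun x hx => (hS x hx).1, sum_congr rfl fun x hx => (hT x hx).1,
      sum_const, sum_const, hcard]
  · have hrecover : ∀ U : Finset (Fin N → Bool), (∀ x ∈ U, IsDyck x) →
        majorityOnesSum i (∑ x ∈ U, Mps x) = ∑ x ∈ U, onesPref x i := fun U hU => by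
      rw [map_sum]
      exact sum_congr rfl fun x hx => majorityOnesSum_Mps (hU x hx) hi0 (by omega)
    rw [← hrecover S hS, ← hrecover T hT, hM]

theorem coordSum_eq_of_sum_onesPref_eq {N : ℕ} {S T : Finset (Fin N → Bool)}
    (h : ∀ i ≤ N, ∑ x ∈ S, onesPref x i = ∑ x ∈ T, onesPref x i) :
    (fun j : Fin N => ∑ x ∈ S, if x j then (1 : ℕ) else 0) =
      fun j => ∑ x ∈ T, if x j then 1 else 0 := by
  funext j
  have hsucc := h (j + 1) j.2
  simp only [onesPref_succ _ j, sum_add_distrib, h j j.2.le] at hsucc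
  omega

/-- a B_h sequence all of whose codewords are Dyck paths is an h-MC code. -/
theorem stmt4 (N h : ℕ) (C : Finset (Fin N → Bool))
    (hB : IsBh C h) (hD : ∀ s ∈ C, IsDyck s) :
    ∀ S T : Finset (Fin N → Bool), S ⊆ C → T ⊆ C → S.card ≤ h → T.card ≤ h → S ≠ T →
      (∑ x ∈ S, Mps x) ≠ ∑ x ∈ T, Mps x := by
  intro S T hSC hTC hScard hTcard hne hM
  refine hne (hB S T hSC hTC hScard hTcard (coordSum_eq_of_sum_onesPref_eq fun i hi => ?_))
  exact sum_onesPref_eq_of_sum_Mps_eq (fun x hx => hD x (hSC hx)) (fun x hx => hD x (hTC hx)) hM hi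
end

section
/- With u ∈ {0,1}^n constructed by the block-balancing procedure (blocks of length √n, each block kept or complemented so the running digital sum of the concatenation of complete blocks alternates in sign appropriately), the running digital sum at every coordinate satisfies |R(u)_i| ≤ (3/2)√n for all i in [n]. -/
/-!
With `k = √n`, at block boundaries the running sum stays in `[-k, k]`: each block has digital
sum of absolute value at most `k` and is taken with the sign opposite to the current running
sum. Between two boundaries the running sum changes by `±1` per step, so at distance `r` from
the left boundary and `k - r` from the right one it is at most `min (k + r) (2k - r) ≤ 3k/2` in
absolute value.
-/

open Finset

/-- Running digital sum at position i: R(x)_i = 2·wt(x₁...x_i) − i. -/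
def RDSat {m : ℕ} (x : Fin m → Bool) (i : ℕ) : ℤ :=
  2 * (∑ j ∈ Finset.univ.filter (fun j : Fin m => (j : ℕ) < i), if x j then (1 : ℤ) else 0) - i

def Rds {m : ℕ} (x : Fin m → Bool) : ℤ := 2 * (∑ i, if x i then (1 : ℤ) else 0) - m

/-- The j-th block (of length k) of a string of length k·k. -/
def blk {k : ℕ} (u : Fin (k * k) → Bool) (j : Fin k) : Fin k → Bool :=
  fun t => u ⟨(j : ℕ) * k + (t : ℕ), by
    have h1 := j.isLt
    have h2 := t.isLt
    calc (j : ℕ) * k + (t : ℕ) < (j : ℕ) * k + k := by omega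
      _ = ((j : ℕ) + 1) * k := by ring
      _ ≤ k * k := Nat.mul_le_mul_right k h1⟩

lemma RDSat_zero {m : ℕ} (x : Fin m → Bool) : RDSat x 0 = 0 := by
  simp [RDSat]

lemma RDSat_succ {m : ℕ} (x : Fin m → Bool) (i : ℕ) (hi : i < m) :
    RDSat x (i + 1) = RDSat x i + if x ⟨i, hi⟩ then 1 else -1 := by
  have h : univ.filter (fun j : Fin m => (j : ℕ) < i + 1)
      = insert ⟨i, hi⟩ (univ.filter fun j : Fin m => (j : ℕ) < i) := by
    ext j
    simp only [mem_filter, mem_univ, true_and, mem_insert, Fin.ext_iff]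
    omega
  unfold RDSat
  rw [h, sum_insert (by simp)]
  push_cast
  split <;> ring

lemma RDSat_self {m : ℕ} (x : Fin m → Bool) : RDSat x m = Rds x := by
  unfold RDSat Rds
  rw [filter_true_of_mem fun j _ => j.isLt]

lemma abs_RDSat_sub_le {m : ℕ} (x : Fin m → Bool) {a b : ℕ} (hab : a ≤ b) (hb : b ≤ m) :
    |RDSat x b - RDSat x a| ≤ (b : ℤ) - a := by
  induction b, hab using Nat.le_induction with
  | base => simp
  | succ b hab ih =>
    have h := abs_le.mp (ih (by omega))
    rw [RDSat_succ x b (by omega), abs_le]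
    push_cast
    constructor <;> split <;> omega

lemma abs_Rds_le {k : ℕ} (v : Fin k → Bool) : |Rds v| ≤ k := by
  have h0 : (0 : ℤ) ≤ ∑ i, if v i then (1 : ℤ) else 0 :=
    sum_nonneg fun i _ => by split <;> norm_num
  have h1 : (∑ i, if v i then (1 : ℤ) else 0) ≤ k :=
    calc (∑ i, if v i then (1 : ℤ) else 0) ≤ ∑ _i : Fin k, (1 : ℤ) :=
          sum_le_sum fun i _ => by split <;> norm_num
      _ = k := by simp
  unfold Rds
  rw [abs_le]
  constructor <;> linarith

lemma Rds_not {k : ℕ} (v : Fin k → Bool) : Rds (fun t => !v t) = -Rds v := by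
  have h (i : Fin k) : (if !v i then (1 : ℤ) else 0) = 1 - if v i then 1 else 0 := by
    cases v i <;> simp
  unfold Rds
  rw [sum_congr rfl fun i _ => h i, sum_sub_distrib]
  simp only [sum_const, card_univ, Fintype.card_fin, nsmul_eq_mul, mul_one]
  ring

lemma RDSat_mul_add {k : ℕ} (u : Fin (k * k) → Bool) {j : ℕ} (hj : j < k) {r : ℕ}
    (hr : r ≤ k) :
    RDSat u (j * k + r) = RDSat u (j * k) + RDSat (blk u ⟨j, hj⟩) r := by
  induction r with
  | zero => simp [RDSat_zero]
  | succ r ih =>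
    have hjr : j * k + r < k * k :=
      calc j * k + r < (j + 1) * k := by rw [add_mul, one_mul]; omega
        _ ≤ k * k := Nat.mul_le_mul_right k hj
    rw [← add_assoc, RDSat_succ u _ hjr, RDSat_succ (blk u ⟨j, hj⟩) r (by omega),
      ih (by omega)]
    exact add_assoc _ _ _

lemma RDSat_succ_mul {k : ℕ} (u : Fin (k * k) → Bool) {j : ℕ} (hj : j < k) :
    RDSat u ((j + 1) * k) = RDSat u (j * k) + Rds (blk u ⟨j, hj⟩) := by
  rw [add_one_mul, RDSat_mul_add u hj le_rfl, RDSat_self]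

/-- The condition picks `v` or its complement so that the digital sum added has the sign
opposite to `a`. -/
lemma abs_add_Rds_balance_le {k : ℕ} {a : ℤ} (ha : |a| ≤ k) (v : Fin k → Bool) :
    |a + Rds (if (a < 0 ↔ 0 ≤ Rds v) then v else fun t => !v t)| ≤ k := by
  have hv := abs_le.mp (abs_Rds_le v)
  have ha' := abs_le.mp ha
  rw [abs_le]
  split_ifs with hc
  · by_cases h : a < 0
    · have := hc.mp h; omega
    · have := mt hc.mpr h; omega
  · rw [Rds_not]
    by_cases h : a < 0
    · have : ¬0 ≤ Rds v := fun h' => hc (iff_of_true h h'); omega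
    · have : 0 ≤ Rds v := by_contra fun h' => hc (iff_of_false h h'); omega

lemma abs_RDSat_mul_le {k : ℕ} {s u : Fin (k * k) → Bool}
    (hrec : ∀ j : Fin k, 0 < (j : ℕ) →
      blk u j = if (RDSat u ((j : ℕ) * k) < 0 ↔ 0 ≤ Rds (blk s j))
        then blk s j else fun t => !blk s j t) :
    ∀ j ≤ k, |RDSat u (j * k)| ≤ k := by
  intro j
  induction j with
  | zero => simp [RDSat_zero]
  | succ j ih =>
    intro hj
    rw [RDSat_succ_mul u hj]
    rcases Nat.eq_zero_or_pos j with rfl | hj0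
    · simpa [RDSat_zero] using abs_Rds_le (blk u ⟨0, hj⟩)
    · rw [hrec ⟨j, hj⟩ hj0]
      exact abs_add_Rds_balance_le (ih (by omega)) _

lemma two_mul_abs_RDSat_le {m : ℕ} (x : Fin m → Bool) {a i b : ℕ} (hai : a ≤ i)
    (hib : i ≤ b) (hb : b ≤ m) {c : ℤ} (ha : |RDSat x a| ≤ c) (hb' : |RDSat x b| ≤ c) :
    2 * |RDSat x i| ≤ 2 * c + (b - a) := by
  have hl := abs_le.mp (abs_RDSat_sub_le x hai (hib.trans hb))
  have hr := abs_le.mp (abs_RDSat_sub_le x hib hb)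
  have ha := abs_le.mp ha
  have hb' := abs_le.mp hb'
  rcases abs_cases (RDSat x i) with ⟨h, _⟩ | ⟨h, _⟩ <;> rw [h] <;> omega

theorem stmt7_general (k : ℕ) (s u : Fin (k * k) → Bool)
    (hrec : ∀ j : Fin k, 0 < (j : ℕ) →
      blk u j = if (RDSat u ((j : ℕ) * k) < 0 ↔ 0 ≤ Rds (blk s j))
        then blk s j else fun t => ! blk s j t) :
    ∀ i : ℕ, 1 ≤ i → i ≤ k * k → 2 * |RDSat u i| ≤ 3 * (k : ℤ) := by
  intro i hi hik
  have hk : 0 < k := Nat.pos_of_ne_zero fun h => by subst h; omega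
  obtain ⟨j, r, hr, hjr⟩ : ∃ j r, r < k ∧ j * k + r = i - 1 :=
    ⟨(i - 1) / k, (i - 1) % k, Nat.mod_lt _ hk, Nat.div_add_mod' _ _⟩
  have hj : j < k := lt_of_not_ge fun h => by
    nlinarith [Nat.mul_le_mul_right k h, show i - 1 < k * k by omega]
  have hji : j * k ≤ i := by omega
  have hij : i ≤ (j + 1) * k := by rw [add_one_mul]; omega
  have hbound := two_mul_abs_RDSat_le u hji hij (Nat.mul_le_mul_right k hj)
    (abs_RDSat_mul_le hrec j hj.le) (abs_RDSat_mul_le hrec (j + 1) hj)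
  push_cast at hbound
  linarith

/-- for u obtained from s by the block-balancing procedure, the running
digital sum at every coordinate i ∈ [n] satisfies |R(u)_i| ≤ (3/2)·√n. -/
theorem stmt7 (k : ℕ) (s u : Fin (k * k) → Bool)
    (h0 : ∀ h : 0 < k, blk u ⟨0, h⟩ = blk s ⟨0, h⟩)
    (hrec : ∀ j : Fin k, 0 < (j : ℕ) →
      blk u j = if (RDSat u ((j : ℕ) * k) < 0 ↔ 0 ≤ Rds (blk s j))
        then blk s j else fun t => ! blk s j t) :
    ∀ i : ℕ, 1 ≤ i → i ≤ k * k → 2 * |RDSat u i| ≤ 3 * (k : ℤ) :=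
  stmt7_general k s u hrec
end

section
/- Let C ⊆ {0,1}^n be a 2-prefix code, m ∈ [n], A_w the set of length-m prefixes of codewords having weight w, and for a ∈ A_w let B_a = {b ∈ {0,1}^{n−m} : ab ∈ C}. Then |C_w| = Σ_{a∈A_w} |B_a| ≤ 2^{n−m} + Σ_{unordered pairs {a,a'} ⊆ A_w} |B_a ∩ B_{a'}| ≤ 2^{n−m} + binom(|A_w|, 2), where C_w = {ab ∈ C : a ∈ A_w}. -/
open Finset

def twoPrefix {n : ℕ} (C : Finset (Fin n → Bool)) : Prop :=
  ∀ S T : Finset (Fin n → Bool), S ⊆ C → T ⊆ C → S.card ≤ 2 → T.card ≤ 2 → S ≠ T →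
    (∑ x ∈ S, Mp x) ≠ ∑ x ∈ T, Mp x

/-- B_a = { b : ab ∈ C }. -/
def BaC {m k : ℕ} (C : Finset (Fin (m + k) → Bool)) (a : Fin m → Bool) :
    Finset (Fin k → Bool) :=
  Finset.univ.filter (fun b => Fin.append a b ∈ C)

/-- A_w: length-m prefixes of codewords having weight w. -/
def AwC {m k : ℕ} (C : Finset (Fin (m + k) → Bool)) (w : ℕ) : Finset (Fin m → Bool) :=
  Finset.univ.filter (fun a => (∃ b, Fin.append a b ∈ C) ∧ wtB a = w)

/-- C_w: codewords whose length-m prefix has weight w. -/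
def CwC {m k : ℕ} (C : Finset (Fin (m + k) → Bool)) (w : ℕ) :
    Finset (Fin (m + k) → Bool) :=
  C.filter (fun x => wtB (fun i : Fin m => x (Fin.castAdd k i)) = w)

/-!
The prefix compositions of `ab` are those of `a` together with a multiset that depends only on
the weight of `a` and on `b`. So if `a ≠ a'` have equal weight and `b ≠ b'` both lie in
`B_a ∩ B_a'`, the pairs `{ab, a'b'}` and `{ab', a'b}` of codewords have the same multiset sum,
which a 2-prefix code forbids: `|B_a ∩ B_a'| ≤ 1`. The bound on `Σ |B_a|` is double counting
over suffixes: a suffix lying in `d` of the sets `B_a` contributes `d ≤ 1 + (d choose 2)`.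
-/

theorem powersetCard_filter_forall {α : Type*} (s : Finset α) (n : ℕ) (p : α → Prop)
    [DecidablePred p] : {P ∈ s.powersetCard n | ∀ a ∈ P, p a} = (s.filter p).powersetCard n := by
  ext P
  simp only [mem_filter, mem_powersetCard, subset_iff]
  grind

theorem le_one_add_choose_two (d : ℕ) : d ≤ 1 + d.choose 2 := by
  induction d with
  | zero => simp
  | succ d ih => rw [Nat.choose_succ_succ, Nat.choose_one_right]; omega

section PairCounting

variable {ι β : Type*} [Fintype β] (A : Finset ι) (R : ι → β → Prop) [∀ a, DecidablePred (R a)]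

theorem sum_powersetCard_two_card_filter_forall :
    ∑ P ∈ A.powersetCard 2, #{b | ∀ a ∈ P, R a b} = ∑ b, (#{a ∈ A | R a b}).choose 2 := by
  refine (sum_card_bipartiteAbove_eq_sum_card_bipartiteBelow (fun P b => ∀ a ∈ P, R a b)).trans ?_
  simp only [bipartiteBelow, powersetCard_filter_forall, card_powersetCard]

theorem sum_card_filter_le_card_add_sum_powersetCard_two :
    ∑ a ∈ A, #{b | R a b} ≤ Fintype.card β + ∑ P ∈ A.powersetCard 2, #{b | ∀ a ∈ P, R a b} := by
  rw [sum_powersetCard_two_card_filter_forall, Fintype.card_eq_sum_ones, ← sum_add_distrib]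
  refine (sum_card_bipartiteAbove_eq_sum_card_bipartiteBelow R).trans_le ?_
  exact sum_le_sum fun b _ => le_one_add_choose_two _

end PairCounting

theorem Fin.append_eq_append_iff {α : Type*} {m k : ℕ} {a a' : Fin m → α} {b b' : Fin k → α} :
    Fin.append a b = Fin.append a' b' ↔ a = a' ∧ b = b' := by
  rw [← Prod.mk_inj]
  exact (Fin.appendEquiv m k).injective.eq_iff (a := (a, b)) (b := (a', b'))

theorem onesPref_append_of_le {m k : ℕ} (a : Fin m → Bool) (b : Fin k → Bool) {i : ℕ}
    (hi : i ≤ m) : onesPref (Fin.append a b) i = onesPref a i := by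
  simp only [onesPref, sum_filter, Fin.sum_univ_add, Fin.append_left, Fin.append_right,
    Fin.val_castAdd, Fin.val_natAdd, add_eq_left]
  exact sum_eq_zero fun j _ => if_neg (by omega)

theorem onesPref_append_add {m k : ℕ} (a : Fin m → Bool) (b : Fin k → Bool) (t : ℕ) :
    onesPref (Fin.append a b) (m + t) = wtB a + onesPref b t := by
  simp only [onesPref, wtB, sum_filter, Fin.sum_univ_add, Fin.append_left, Fin.append_right,
    Fin.val_castAdd, Fin.val_natAdd, add_lt_add_iff_left]
  congr 1
  exact sum_congr rfl fun j _ => if_pos (by omega)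

def MpTail (m w : ℕ) {k : ℕ} (b : Fin k → Bool) : Multiset (ℕ × ℕ) :=
  (Multiset.range k).map fun i => (m + (i + 1) - (w + onesPref b (i + 1)), w + onesPref b (i + 1))

theorem Mp_append {m k : ℕ} (a : Fin m → Bool) (b : Fin k → Bool) :
    Mp (Fin.append a b) = Mp a + MpTail m (wtB a) b := by
  rw [Mp, Multiset.range_add, Multiset.map_add, Multiset.map_map, Mp, MpTail]
  congr 1
  · refine Multiset.map_congr rfl fun i hi => ?_
    rw [onesPref_append_of_le a b (Multiset.mem_range.mp hi)]
  · refine Multiset.map_congr rfl fun i _ => ?_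
    simp only [Function.comp, add_assoc, onesPref_append_add]

theorem Mp_append_add_Mp_append_swap {m k : ℕ} {a a' : Fin m → Bool} (hw : wtB a = wtB a')
    (b b' : Fin k → Bool) :
    Mp (Fin.append a b) + Mp (Fin.append a' b') = Mp (Fin.append a b') + Mp (Fin.append a' b) := by
  simp only [Mp_append, hw]
  abel

theorem card_BaC_inter_BaC_le_one {m k : ℕ} {C : Finset (Fin (m + k) → Bool)} (hC : twoPrefix C)
    {a a' : Fin m → Bool} (hne : a ≠ a') (hw : wtB a = wtB a') :
    #(BaC C a ∩ BaC C a') ≤ 1 := by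
  refine card_le_one.mpr fun b hb b' hb' => ?_
  simp only [BaC, mem_inter, mem_filter, mem_univ, true_and] at hb hb'
  by_contra hbb
  have hS : Fin.append a b ≠ Fin.append a' b' := by simp [Fin.append_eq_append_iff, hne]
  have hT : Fin.append a b' ≠ Fin.append a' b := by simp [Fin.append_eq_append_iff, hne]
  refine hC {Fin.append a b, Fin.append a' b'} {Fin.append a b', Fin.append a' b}
    (by simp [insert_subset_iff, hb.1, hb'.2]) (by simp [insert_subset_iff, hb.2, hb'.1])
    card_le_two card_le_two (fun hST => ?_) ?_
  · have := hST ▸ mem_insert_self (Fin.append a b) {Fin.append a' b'}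
    simp [Fin.append_eq_append_iff, hne, hbb] at this
  · rw [sum_pair hS, sum_pair hT]
    exact Mp_append_add_Mp_append_swap hw b b'

theorem card_filter_forall_append_mem_le_one {m k : ℕ} {C : Finset (Fin (m + k) → Bool)}
    (hC : twoPrefix C) {w : ℕ} {P : Finset (Fin m → Bool)} (hP : P ∈ (AwC C w).powersetCard 2) :
    #{b : Fin k → Bool | ∀ a ∈ P, Fin.append a b ∈ C} ≤ 1 := by
  obtain ⟨hPA, hP2⟩ := mem_powersetCard.mp hP
  obtain ⟨a, a', hne, rfl⟩ := card_eq_two.mp hP2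
  obtain ⟨-, -, ha⟩ := mem_filter.mp (hPA (mem_insert_self a {a'}))
  obtain ⟨-, -, ha'⟩ := mem_filter.mp (hPA (mem_insert_of_mem (mem_singleton_self a')))
  have hfilter : ({b | ∀ x ∈ ({a, a'} : Finset _), Fin.append x b ∈ C} : Finset (Fin k → Bool)) =
      BaC C a ∩ BaC C a' := by
    ext b
    simp [BaC]
  rw [hfilter]
  exact card_BaC_inter_BaC_le_one hC hne (ha.trans ha'.symm)

theorem CwC_eq_biUnion {m k : ℕ} (C : Finset (Fin (m + k) → Bool)) (w : ℕ) :
    CwC C w = (AwC C w).biUnion fun a => (BaC C a).image (Fin.append a) := by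
  ext x
  simp only [CwC, AwC, BaC, mem_biUnion, mem_filter, mem_univ, true_and, mem_image]
  constructor
  · rintro ⟨hxC, hxw⟩
    obtain ⟨⟨a, b⟩, rfl⟩ := (Fin.appendEquiv m k).surjective x
    simp only [Fin.appendEquiv_apply, Fin.append_left] at hxC hxw
    exact ⟨a, ⟨⟨b, hxC⟩, hxw⟩, b, hxC, rfl⟩
  · rintro ⟨a, ⟨-, haw⟩, b, hb, rfl⟩
    simpa [Fin.append_left] using ⟨hb, haw⟩

theorem card_CwC_eq_sum_card_BaC {m k : ℕ} (C : Finset (Fin (m + k) → Bool)) (w : ℕ) :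
    #(CwC C w) = ∑ a ∈ AwC C w, #(BaC C a) := by
  rw [CwC_eq_biUnion, card_biUnion]
  · exact sum_congr rfl fun a _ =>
      card_image_of_injective _ fun b b' h => (Fin.append_eq_append_iff.mp h).2
  · intro a _ a' _ hne
    simp only [disjoint_left, mem_image, not_exists, not_and]
    rintro _ ⟨b, -, rfl⟩ b' - h
    exact hne (Fin.append_eq_append_iff.mp h).1.symm

/-- |C_w| = Σ_{a∈A_w} |B_a| ≤ 2^{n−m} + Σ_{{a,a'}⊆A_w} |B_a ∩ B_{a'}|
≤ 2^{n−m} + C(|A_w|, 2). -/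
theorem stmt18 (m k : ℕ) (C : Finset (Fin (m + k) → Bool)) (hC : twoPrefix C) (w : ℕ) :
    (CwC C w).card = (∑ a ∈ AwC C w, (BaC C a).card) ∧
    (CwC C w).card ≤ 2 ^ k + ∑ P ∈ (AwC C w).powersetCard 2,
      (Finset.univ.filter (fun b : Fin k → Bool => ∀ a ∈ P, Fin.append a b ∈ C)).card ∧
    (CwC C w).card ≤ 2 ^ k + ((AwC C w).card).choose 2 := by
  have hcard := card_CwC_eq_sum_card_BaC C w
  have hpairs : #(CwC C w) ≤ 2 ^ k + ∑ P ∈ (AwC C w).powersetCard 2,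
      #{b : Fin k → Bool | ∀ a ∈ P, Fin.append a b ∈ C} := by
    have hcube : Fintype.card (Fin k → Bool) = 2 ^ k := by simp
    rw [hcard, ← hcube]
    convert sum_card_filter_le_card_add_sum_powersetCard_two (AwC C w) (Fin.append · · ∈ C) using 6
    rfl
  refine ⟨hcard, hpairs, hpairs.trans ?_⟩
  gcongr 2 ^ k + ?_
  calc ∑ P ∈ (AwC C w).powersetCard 2, #{b : Fin k → Bool | ∀ a ∈ P, Fin.append a b ∈ C}
      ≤ ∑ _P ∈ (AwC C w).powersetCard 2, 1 :=
        sum_le_sum fun P hP => card_filter_forall_append_mem_le_one hC hP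
    _ = (#(AwC C w)).choose 2 := by simp
end
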